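/- Let k be an algebraically closed field of characteristic 2. Then the Witt–Jacobson Lie algebra W(2;1) = Der(k[X,Y]/(X²,Y²)) is isomorphic, as a Lie algebra over k, to sl_3(k). -/

import Mathlib

/-!
Every derivation `D` of `O = k[x,y]/(x², y²)` kills the scalars `k·1`, so `W(2;1)` acts on the
three-dimensional space `V = O/k·1`. This action is faithful: if `D` maps `O` into `k·1`, then
`D x = a` and `D y = b` are scalars, and `D (xy) = b x + a y` is a scalar only when `a = b = 0`.
Since `D` vanishes on `k·1`, its trace on `V` is its trace on `O`. In the basis
`1, x, y, xy` the diagonal of `D` is `0, a₁, b₂, a₁ + b₂`, where `a₁` is the `x`-coefficient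
of `D x` and `b₂` the `y`-coefficient of `D y`, so the trace `2 (a₁ + b₂)` vanishes in
characteristic `2`.
Finally, in characteristic `2` any pair `(D x, D y) ∈ O²` defines a derivation, because
`D (x²) = 2 x D x = 0`; hence `dim W(2;1) = 8 = dim sl₃`, and the faithful traceless
representation on `V` identifies `W(2;1)` with `sl₃(k)`.
-/

open MvPolynomial

set_option synthInstance.maxHeartbeats 1000000
set_option maxHeartbeats 1000000

/-- the truncated polynomial ring `O(2;1) = k[X,Y]/(X^p, Y^p)` -/
abbrev TruncatedPoly (k : Type) [Field k] (p : ℕ) : Type :=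
  MvPolynomial (Fin 2) k ⧸
    (Ideal.span (Set.range fun i : Fin 2 => (X i : MvPolynomial (Fin 2) k) ^ p))

/-- the Witt–Jacobson algebra `W(2;1) = Der (O(2;1))` -/
abbrev WittJacobson (k : Type) [Field k] (p : ℕ) : Type :=
  Derivation k (TruncatedPoly k p) (TruncatedPoly k p)

open Module LinearMap

theorem LinearMap.trace_quotient_eq_of_le_ker {K V : Type*} [Field K] [AddCommGroup V]
    [Module K V] [FiniteDimensional K V] {p : Submodule K V} {f : Module.End K V}
    {g : Module.End K (V ⧸ p)} (hf : p ≤ ker f) (hg : g ∘ₗ p.mkQ = p.mkQ ∘ₗ f) :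
    trace K (V ⧸ p) g = trace K V f := by
  have hg' : g = p.mkQ ∘ₗ p.liftQ f hf := p.linearMap_qext (by rw [hg]; rfl)
  rw [hg', ← trace_comp_comm', p.liftQ_mkQ]

section

attribute [local instance] LieRing.ofAssociativeRing

theorem LieAlgebra.SpecialLinear.finrank_sl_add_one {K n : Type*} [Field K] [Fintype n]
    [DecidableEq n] [Nonempty n] : finrank K (sl n K) + 1 = Fintype.card n ^ 2 := by
  have hsurj : Function.Surjective (Matrix.traceLinearMap n K K) := fun c =>
    ⟨Matrix.single (Classical.arbitrary n) (Classical.arbitrary n) c,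
      Matrix.trace_single_eq_same _ _⟩
  have h := (Matrix.traceLinearMap n K K).finrank_range_add_finrank_ker
  rw [LinearMap.range_eq_top.2 hsurj, finrank_top, finrank_self, finrank_matrix, finrank_self,
    mul_one] at h
  rw [sq, ← h, add_comm]
  rfl

theorem LieModule.nonempty_lieEquiv_sl {K L V ι : Type*} [Field K] [LieRing L] [LieAlgebra K L]
    [AddCommGroup V] [Module K V] [LieRingModule L V] [LieModule K L V] [IsFaithful K L V]
    [Fintype ι] [DecidableEq ι] [Nonempty ι] (b : Basis ι K V)
    (htrace : ∀ x, trace K V (toEnd K L V x) = 0) (hdim : finrank K L + 1 = Fintype.card ι ^ 2) :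
    Nonempty (L ≃ₗ⁅K⁆ LieAlgebra.SpecialLinear.sl ι K) := by
  let ρ : L →ₗ⁅K⁆ Matrix ι ι K :=
    (LinearMap.toMatrixAlgEquiv b).toLieEquiv.toLieHom.comp (toEnd K L V)
  have hρ : Function.Injective ρ :=
    (LinearMap.toMatrixAlgEquiv b).injective.comp IsFaithful.injective_toEnd
  have hrange : ρ.range = LieAlgebra.SpecialLinear.sl ι K := by
    apply LieSubalgebra.toSubmodule_injective
    apply Submodule.eq_of_le_of_finrank_eq
    · rintro _ ⟨x, rfl⟩
      exact (trace_eq_matrix_trace K b _).symm.trans (htrace x)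
    · have hsl := LieAlgebra.SpecialLinear.finrank_sl_add_one (K := K) (n := ι)
      exact (LinearMap.finrank_range_of_inj hρ).trans
        (by change _ = finrank K (LieAlgebra.SpecialLinear.sl ι K); omega)
  exact ⟨(ρ.equivRangeOfInjective hρ).trans (LieEquiv.ofEq _ _ (congrArg _ hrange))⟩

end

namespace Ideal.Quotient

variable {R A M : Type*} [CommRing R] [CommRing A] [Algebra R A] [AddCommGroup M] [Module R M]

def liftₗ (I : Ideal A) (f : A →ₗ[R] M) (hf : ∀ a ∈ I, f a = 0) : A ⧸ I →ₗ[R] M :=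
  (I.restrictScalars R).liftQ f hf ∘ₗ
    (Submodule.Quotient.restrictScalarsEquiv R I).symm.toLinearMap

@[simp]
theorem liftₗ_mk (I : Ideal A) (f : A →ₗ[R] M) (hf : ∀ a ∈ I, f a = 0) (a : A) :
    liftₗ I f hf (Ideal.Quotient.mk I a) = f a :=
  rfl

end Ideal.Quotient

namespace Derivation

def scalars (R A : Type*) [CommRing R] [CommRing A] [Algebra R A] :
    LieSubmodule R (Derivation R A A) A :=
  { Submodule.span R {1} with
    lie_mem := by
      intro D m hm
      obtain ⟨c, rfl⟩ := Submodule.mem_span_singleton.1 hm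
      simp }

theorem trace_toEnd_quotient_scalars {K A : Type*} [Field K] [CommRing A] [Algebra K A]
    [FiniteDimensional K A] (D : Derivation K A A) :
    trace K (A ⧸ scalars K A) (LieModule.toEnd K _ _ D) = trace K A D :=
  LinearMap.trace_quotient_eq_of_le_ker (Submodule.span_le.2 (by simp)) rfl

variable {R A : Type*} [CommRing R] [CommRing A] [Algebra R A]

theorem map_eq_zero_of_mem_span {S : Set A} (d : Derivation R A (A ⧸ Ideal.span S))
    (hS : ∀ s ∈ S, d s = 0) : ∀ a ∈ Ideal.span S, d a = 0 := by
  intro a ha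
  induction ha using Submodule.span_induction with
  | mem s hs => exact hS s hs
  | zero => exact d.map_zero
  | add a b _ _ ha hb => rw [d.map_add, ha, hb, add_zero]
  | smul b a ha h =>
    rw [smul_eq_mul, d.leibniz, h, smul_zero, zero_add, Algebra.smul_def,
      Ideal.Quotient.algebraMap_eq, Ideal.Quotient.eq_zero_iff_mem.2 ha, zero_mul]

def liftQuotient (I : Ideal A) (d : Derivation R A (A ⧸ I)) (hd : ∀ a ∈ I, d a = 0) :
    Derivation R (A ⧸ I) (A ⧸ I) where
  toLinearMap := Ideal.Quotient.liftₗ I d.toLinearMap hd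
  map_one_eq_zero' := d.map_one_eq_zero
  leibniz' a b := by
    obtain ⟨a, rfl⟩ := Ideal.Quotient.mk_surjective a
    obtain ⟨b, rfl⟩ := Ideal.Quotient.mk_surjective b
    simp [← map_mul, d.leibniz, Algebra.smul_def]

end Derivation

noncomputable section

namespace TruncatedPoly

variable {k : Type} [Field k] {p : ℕ}

def var (i : Fin 2) : TruncatedPoly k p := Ideal.Quotient.mk _ (X i)

theorem var_pow (i : Fin 2) : (var i : TruncatedPoly k p) ^ p = 0 := by
  rw [var, ← map_pow, Ideal.Quotient.eq_zero_iff_mem]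
  exact Ideal.subset_span ⟨i, rfl⟩

theorem derivation_ext {D₁ D₂ : WittJacobson k p} (h : ∀ i, D₁ (var i) = D₂ (var i)) :
    D₁ = D₂ := by
  have h' : D₁.compAlgebraMap (MvPolynomial (Fin 2) k) = D₂.compAlgebraMap _ :=
    MvPolynomial.derivation_ext h
  ext z
  obtain ⟨q, rfl⟩ := Ideal.Quotient.mk_surjective z
  exact DFunLike.congr_fun h' q

def coeff (m : Fin 2 →₀ ℕ) (hm : ∀ i, m i < p) : TruncatedPoly k p →ₗ[k] k :=
  Ideal.Quotient.liftₗ _ (lcoeff k m) fun q hq => by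
    by_contra hne
    have hI : Set.range (fun i : Fin 2 => (X i : MvPolynomial (Fin 2) k) ^ p) =
        (fun s => monomial s 1) '' Set.range (fun i => Finsupp.single i p) := by
      simp [← Set.range_comp, Function.comp_def, X_pow_eq_monomial]
    rw [hI] at hq
    obtain ⟨_, ⟨i, rfl⟩, hi⟩ := mem_ideal_span_monomial_image.1 hq m (mem_support_iff.2 hne)
    exact (hm i).not_ge (by simpa using hi i)

@[simp]
theorem coeff_mk (m : Fin 2 →₀ ℕ) (hm : ∀ i, m i < p) (q : MvPolynomial (Fin 2) k) :
    coeff m hm (Ideal.Quotient.mk _ q) = q.coeff m :=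
  rfl

section CharP

variable [CharP k p]

def mkDerivation (f : Fin 2 → TruncatedPoly k p) : WittJacobson k p :=
  (MvPolynomial.mkDerivation k f).liftQuotient _ <| Derivation.map_eq_zero_of_mem_span _ <| by
    rintro _ ⟨i, rfl⟩
    rw [Derivation.leibniz_pow, ← Nat.cast_smul_eq_nsmul k, CharP.cast_eq_zero, zero_smul]

@[simp]
theorem mkDerivation_var (f : Fin 2 → TruncatedPoly k p) (i : Fin 2) :
    mkDerivation f (var i) = f i :=
  MvPolynomial.mkDerivation_X k f i

def derivationEquivPi : WittJacobson k p ≃ₗ[k] (Fin 2 → TruncatedPoly k p) where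
  toFun D i := D (var i)
  map_add' _ _ := rfl
  map_smul' _ _ := rfl
  invFun := mkDerivation
  left_inv _ := derivation_ext fun i => mkDerivation_var _ i
  right_inv f := funext (mkDerivation_var f)

end CharP

def monomialExp : Fin 4 → (Fin 2 →₀ ℕ) :=
  ![0, Finsupp.single 0 1, Finsupp.single 1 1, Finsupp.single 0 1 + Finsupp.single 1 1]

theorem monomialExp_lt_two (j : Fin 4) (i : Fin 2) : monomialExp j i < 2 := by
  fin_cases j <;> fin_cases i <;> simp [monomialExp]

theorem monomialExp_injective : Function.Injective monomialExp := by
  intro i j h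
  have h0 := DFunLike.congr_fun h 0
  have h1 := DFunLike.congr_fun h 1
  fin_cases i <;> fin_cases j <;> simp [monomialExp] at h0 h1 ⊢

def coords : TruncatedPoly k 2 →ₗ[k] (Fin 4 → k) :=
  LinearMap.pi fun j => coeff (monomialExp j) (monomialExp_lt_two j)

def monomialBasisFun : Fin 4 → TruncatedPoly k 2 := ![1, var 0, var 1, var 0 * var 1]

theorem monomialBasisFun_eq (j : Fin 4) :
    (monomialBasisFun j : TruncatedPoly k 2) =
      Ideal.Quotient.mk _ (monomial (monomialExp j) 1) := by
  fin_cases j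
  · exact (map_one _).symm
  · rfl
  · rfl
  · change _ * _ = _
    rw [var, var, ← map_mul, X, X, monomial_mul, one_mul]
    rfl

theorem coords_monomialBasisFun (i : Fin 4) :
    coords (monomialBasisFun i : TruncatedPoly k 2) = Pi.single i 1 := by
  ext j
  rw [monomialBasisFun_eq, coords, LinearMap.pi_apply, coeff_mk, coeff_monomial]
  simp [monomialExp_injective.eq_iff, Pi.single_apply, eq_comm]

theorem mk_mem_span_monomialBasisFun (q : MvPolynomial (Fin 2) k) :
    Ideal.Quotient.mk _ q ∈ Submodule.span k (Set.range (monomialBasisFun (k := k))) := by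
  set S := Submodule.span k (Set.range (monomialBasisFun (k := k)))
  have mem (j : Fin 4) : monomialBasisFun j ∈ S := Submodule.subset_span ⟨j, rfl⟩
  have mul_var_mem (i : Fin 2) : ∀ z ∈ S, z * var i ∈ S := by
    suffices S ≤ S.comap (LinearMap.mulRight k (var i)) from fun z hz => this hz
    rw [Submodule.span_le]
    rintro _ ⟨j, rfl⟩
    have hsq (i : Fin 2) : (var i : TruncatedPoly k 2) * var i = 0 := by rw [← sq, var_pow]
    have hsq' (i : Fin 2) (z : TruncatedPoly k 2) : var i * (var i * z) = 0 := by
      rw [← mul_assoc, hsq, zero_mul]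
    have hx : var 0 ∈ S := mem 1
    have hy : var 1 ∈ S := mem 2
    have hxy : var 0 * var 1 ∈ S := mem 3
    fin_cases i <;> fin_cases j <;>
      simp [monomialBasisFun, mul_assoc, mul_comm (var 1) (var 0), hsq, hsq', hx, hy, hxy]
  induction q using MvPolynomial.induction_on with
  | C a =>
    rw [← MvPolynomial.algebraMap_eq, Ideal.Quotient.mk_algebraMap,
      Algebra.algebraMap_eq_smul_one]
    exact S.smul_mem a (mem 0)
  | add q r hq hr => rw [map_add]; exact add_mem hq hr
  | mul_X q i hq => rw [map_mul]; exact mul_var_mem i _ hq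

def monomialBasis : Basis (Fin 4) k (TruncatedPoly k 2) :=
  Basis.mk (v := monomialBasisFun)
    (LinearIndependent.of_comp coords <| by
      convert (Pi.basisFun k (Fin 4)).linearIndependent
      ext i : 1
      simp [coords_monomialBasisFun])
    (fun z _ => by
      obtain ⟨q, rfl⟩ := Ideal.Quotient.mk_surjective z
      exact mk_mem_span_monomialBasisFun q)

instance : FiniteDimensional k (TruncatedPoly k 2) := .of_basis monomialBasis

theorem monomialBasis_apply (j : Fin 4) :
    (monomialBasis j : TruncatedPoly k 2) = monomialBasisFun j :=
  Basis.mk_apply _ _ _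

theorem monomialBasis_repr_mk (q : MvPolynomial (Fin 2) k) (j : Fin 4) :
    monomialBasis.repr (Ideal.Quotient.mk _ q) j = q.coeff (monomialExp j) := by
  have h : coords = (monomialBasis (k := k)).equivFun.toLinearMap :=
    monomialBasis.ext fun i => by
      ext j
      rw [LinearEquiv.coe_coe, Basis.equivFun_self, monomialBasis_apply, coords_monomialBasisFun,
        Pi.single_apply]
      exact if_congr eq_comm rfl rfl
  exact (congr_fun (DFunLike.congr_fun h (Ideal.Quotient.mk _ q)) j).symm

theorem monomialBasis_repr_var_zero_mul (z : TruncatedPoly k 2) :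
    monomialBasis.repr (var 0 * z) 3 = monomialBasis.repr z 2 := by
  obtain ⟨q, rfl⟩ := Ideal.Quotient.mk_surjective z
  rw [var, ← map_mul, monomialBasis_repr_mk, monomialBasis_repr_mk, coeff_X_mul']
  simp [monomialExp]

theorem monomialBasis_repr_var_one_mul (z : TruncatedPoly k 2) :
    monomialBasis.repr (var 1 * z) 3 = monomialBasis.repr z 1 := by
  obtain ⟨q, rfl⟩ := Ideal.Quotient.mk_surjective z
  rw [var, ← map_mul, monomialBasis_repr_mk, monomialBasis_repr_mk, coeff_X_mul']
  simp [monomialExp]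

theorem finrank_eq_four : finrank k (TruncatedPoly k 2) = 4 := by
  simp [finrank_eq_card_basis monomialBasis]

end TruncatedPoly

end

namespace WittJacobson

open TruncatedPoly

variable {k : Type} [Field k]

theorem trace_eq_zero [CharP k 2] (D : WittJacobson k 2) :
    trace k (TruncatedPoly k 2) D = 0 := by
  rw [trace_eq_matrix_trace k monomialBasis, Matrix.trace, Fin.sum_univ_four]
  simp [monomialBasis_apply, monomialBasisFun, Derivation.leibniz,
    monomialBasis_repr_var_zero_mul, monomialBasis_repr_var_one_mul, LinearMap.toMatrix_apply]
  linear_combination (monomialBasis.repr (D (var 0)) 1 + monomialBasis.repr (D (var 1)) 2) *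
    CharTwo.two_eq_zero (R := k)

instance : LieModule.IsFaithful k (WittJacobson k 2)
    (TruncatedPoly k 2 ⧸ Derivation.scalars k (TruncatedPoly k 2)) := by
  refine ⟨(injective_iff_map_eq_zero _).2 fun D hD => ?_⟩
  have hmem (z : TruncatedPoly k 2) : ∃ c : k, c • 1 = D z :=
    Submodule.mem_span_singleton.1 <|
      (LieSubmodule.Quotient.mk_eq_zero' (N := Derivation.scalars k _)).1
        (LinearMap.congr_fun hD (LieSubmodule.Quotient.mk z))
  obtain ⟨a, ha⟩ := hmem (var 0)
  obtain ⟨b, hb⟩ := hmem (var 1)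
  obtain ⟨c, hc⟩ := hmem (var 0 * var 1)
  rw [D.leibniz, ← ha, ← hb] at hc
  have hc' : c • monomialBasis 0 = b • monomialBasis 1 + a • monomialBasis (k := k) 2 := by
    simpa [monomialBasis_apply, monomialBasisFun, mul_smul_comm] using hc
  have h1 := congr_arg (fun z => monomialBasis.repr z 1) hc'
  have h2 := congr_arg (fun z => monomialBasis.repr z 2) hc'
  simp at h1 h2
  refine derivation_ext fun i => ?_
  fin_cases i
  · simp [← ha, ← h2]
  · simp [← hb, ← h1]

theorem finrank_quotient_scalars :
    finrank k (TruncatedPoly k 2 ⧸ Derivation.scalars k (TruncatedPoly k 2)) = 3 := by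
  have hone : (1 : TruncatedPoly k 2) ≠ 0 := by
    simpa [monomialBasis_apply, monomialBasisFun] using (monomialBasis (k := k)).ne_zero 0
  let N := (Derivation.scalars k (TruncatedPoly k 2)).toSubmodule
  have hN : finrank k N = 1 := finrank_span_singleton hone
  have h := N.finrank_quotient_add_finrank
  rw [finrank_eq_four, hN] at h
  change finrank k (TruncatedPoly k 2 ⧸ N) = 3
  omega

theorem finrank_eq_eight [CharP k 2] : finrank k (WittJacobson k 2) = 8 := by
  rw [derivationEquivPi.finrank_eq]
  simp [finrank_pi_fintype, finrank_eq_four]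

end WittJacobson

theorem wittJacobson_char_two_iso_sl3_general
    (k : Type) [Field k] [CharP k 2] :
    Nonempty (WittJacobson k 2 ≃ₗ⁅k⁆ ↥(LieAlgebra.SpecialLinear.sl (Fin 3) k)) :=
  LieModule.nonempty_lieEquiv_sl
    (V := TruncatedPoly k 2 ⧸ Derivation.scalars k (TruncatedPoly k 2))
    (Module.finBasisOfFinrankEq k _ WittJacobson.finrank_quotient_scalars)
    (fun D => (Derivation.trace_toEnd_quotient_scalars D).trans (WittJacobson.trace_eq_zero D))
    (by rw [WittJacobson.finrank_eq_eight]; rfl)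

/-- In characteristic `2`, the Witt–Jacobson algebra
`W(2;1) = Der (k[X,Y]/(X²,Y²))` is isomorphic to `sl₃(k)` as a Lie algebra over `k`. -/
theorem wittJacobson_char_two_iso_sl3
    (k : Type) [Field k] [IsAlgClosed k] [CharP k 2] :
    Nonempty (WittJacobson k 2 ≃ₗ⁅k⁆ ↥(LieAlgebra.SpecialLinear.sl (Fin 3) k)) :=
  wittJacobson_char_two_iso_sl3_general k
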